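/- For every real t, υ(t) ≤ max(4, 1.5·t), where υ(t) = t·φ(t)/(φ(t) − t²/2) with φ(t) = e^t − 1 − t and υ(0) = 3. -/
import Mathlib


open Real

noncomputable def phiFn (t : ℝ) : ℝ := Real.exp t - 1 - t

noncomputable def upsilon (t : ℝ) : ℝ :=
  if t = 0 then 3 else t * phiFn t / (phiFn t - t ^ 2 / 2)

lemma taylor8 (x : ℝ) (hx : 0 ≤ x) :
    1 + x + x^2/2 + x^3/6 + x^4/24 + x^5/120 + x^6/720 + x^7/5040 + x^8/40320 ≤ Real.exp x := by
  have h := Real.sum_le_exp_of_nonneg hx 9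
  simp [Finset.sum_range_succ] at h
  norm_num [Nat.factorial] at h
  linarith

lemma taylor4 (x : ℝ) (hx : 0 ≤ x) :
    1 + x + x^2/2 + x^3/6 + x^4/24 ≤ Real.exp x := by
  have h := Real.sum_le_exp_of_nonneg hx 5
  simp [Finset.sum_range_succ] at h
  norm_num [Nat.factorial] at h
  linarith

theorem stmt_4 (t : ℝ) : upsilon t ≤ max 4 (1.5 * t) := by
  rcases eq_or_ne t 0 with rfl | ht0
  · simp [upsilon]
    norm_num
  rw [upsilon, if_neg ht0, phiFn]
  rcases lt_trichotomy t 0 with hneg | rfl | hpos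
  · -- negative case
    obtain ⟨s, rfl⟩ : ∃ s, t = -s := ⟨-t, by ring⟩
    have hs0 : 0 < s := by linarith
    have hS : (0:ℝ) < 1 + s + s^2/2 + s^3/6 + s^4/24 := by positivity
    have hexp : Real.exp (-s) ≤ 1 / (1 + s + s^2/2 + s^3/6 + s^4/24) := by
      rw [Real.exp_neg, ← one_div]
      exact one_div_le_one_div_of_le hS (taylor4 s hs0.le)
    have hpow3 := pow_pos hs0 3
    have hpow4 := pow_pos hs0 4
    have hpow5 := pow_pos hs0 5
    have hpow6 := pow_pos hs0 6
    have hfrac1 : 1 / (1 + s + s^2/2 + s^3/6 + s^4/24) < 1 - s + s^2/2 := by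
      rw [div_lt_iff₀ hS]
      nlinarith [hpow3, hpow4, hpow5, hpow6]
    have hD : Real.exp (-s) - 1 - (-s) - (-s)^2/2 < 0 := by
      have : (-s)^2 = s^2 := by ring
      rw [this]; linarith
    have hfrac2 : (s+4) / (1 + s + s^2/2 + s^3/6 + s^4/24) ≤ s^2 - 3*s + 4 := by
      rw [div_le_iff₀ hS]
      nlinarith [hpow3, hpow4, hpow5, hpow6]
    have hnum : 4 * (Real.exp (-s) - 1 - (-s) - (-s)^2/2) ≤ (-s) * (Real.exp (-s) - 1 - (-s)) := by
      have hb : Real.exp (-s) - 1 + s ≤ 1 / (1 + s + s^2/2 + s^3/6 + s^4/24) - 1 + s := by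
        linarith
      have hmul : (s+4) * (Real.exp (-s) - 1 + s)
          ≤ (s+4) * (1 / (1 + s + s^2/2 + s^3/6 + s^4/24) - 1 + s) :=
        mul_le_mul_of_nonneg_left hb (by linarith)
      have h2 : (s+4) * (1 / (1 + s + s^2/2 + s^3/6 + s^4/24) - 1 + s)
          = (s+4) / (1 + s + s^2/2 + s^3/6 + s^4/24) + (s+4)*(s-1) := by
        ring
      rw [h2] at hmul
      nlinarith [hmul, hfrac2]
    have h4 : (-s) * (Real.exp (-s) - 1 - (-s)) / (Real.exp (-s) - 1 - (-s) - (-s) ^ 2 / 2) ≤ 4 := by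
      rw [div_le_iff_of_neg (by linarith [hD] : Real.exp (-s) - 1 - (-s) - (-s) ^ 2 / 2 < 0)]
      linarith [hnum]
    calc (-s) * (Real.exp (-s) - 1 - (-s)) / (Real.exp (-s) - 1 - (-s) - (-s) ^ 2 / 2)
        ≤ 4 := h4
      _ ≤ max 4 (1.5 * (-s)) := le_max_left _ _
  · exact absurd rfl ht0
  · -- positive case
    have hT8 := taylor8 t hpos.le
    have hD : 0 < Real.exp t - 1 - t - t^2/2 := by
      nlinarith [pow_pos hpos 3, pow_pos hpos 4, pow_pos hpos 5, pow_pos hpos 6,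
        pow_pos hpos 7, pow_pos hpos 8]
    rcases le_or_gt t (8/3) with hle | hgt
    · -- show ≤ 4
      have hnum : t * (Real.exp t - 1 - t) ≤ 4 * (Real.exp t - 1 - t - t^2/2) := by
        have hpow2 : t^2 ≤ (8/3)^2 := pow_le_pow_left₀ hpos.le hle 2
        have hpow3 : t^3 ≤ (8/3)^3 := pow_le_pow_left₀ hpos.le hle 3
        have hpow4 : t^4 ≤ (8/3)^4 := pow_le_pow_left₀ hpos.le hle 4
        have hpow5 : t^5 ≤ (8/3)^5 := pow_le_pow_left₀ hpos.le hle 5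
        have hpow6 : t^6 ≤ (8/3)^6 := pow_le_pow_left₀ hpos.le hle 6
        have hbr : (0:ℝ) ≤ 1/6 - t^2/120 - t^3/360 - t^4/1680 - t^5/10080 - t^6/40320 := by
          nlinarith [hpow2, hpow3, hpow4, hpow5, hpow6]
        have hp : (0:ℝ) ≤ t^3 * (1/6 - t^2/120 - t^3/360 - t^4/1680 - t^5/10080 - t^6/40320) :=
          mul_nonneg (by positivity) hbr
        nlinarith [mul_le_mul_of_nonneg_left hT8 (by linarith : (0:ℝ) ≤ 4 - t), hp]
      have h4 : t * (Real.exp t - 1 - t) / (Real.exp t - 1 - t - t ^ 2 / 2) ≤ 4 := by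
        rw [div_le_iff₀ hD]; linarith
      calc t * (Real.exp t - 1 - t) / (Real.exp t - 1 - t - t ^ 2 / 2) ≤ 4 := h4
        _ ≤ max 4 (1.5 * t) := le_max_left _ _
    · -- t > 8/3 : show ≤ 1.5 t
      have hq : Real.exp t ≥ 1 + t + 1.5 * t^2 := by
        have step : ∀ n : ℕ, (8/3) * t^n ≤ t^(n+1) := by
          intro n
          have := mul_le_mul_of_nonneg_right hgt.le (pow_nonneg hpos.le n)
          calc (8/3) * t^n ≤ t * t^n := this
            _ = t^(n+1) := by ring
        have h3 := step 2
        have h4 := step 3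
        have h5 := step 4
        have h6 := step 5
        have h7 := step 6
        have h8 := step 7
        linarith [hT8]
      have hnum : t * (Real.exp t - 1 - t) ≤ 1.5 * t * (Real.exp t - 1 - t - t^2/2) := by
        have hkey : Real.exp t - 1 - t ≤ 1.5 * (Real.exp t - 1 - t - t^2/2) := by
          nlinarith [hq]
        nlinarith [mul_le_mul_of_nonneg_left hkey hpos.le]
      have h15 : t * (Real.exp t - 1 - t) / (Real.exp t - 1 - t - t ^ 2 / 2) ≤ 1.5 * t := by
        rw [div_le_iff₀ hD]; linarith
      calc t * (Real.exp t - 1 - t) / (Real.exp t - 1 - t - t ^ 2 / 2) ≤ 1.5 * t := h15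
        _ ≤ max 4 (1.5 * t) := le_max_right _ _
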